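/- arXiv:0807.2160 — 3 statements merged into one kernel-verified Lean document; each statement's English description precedes it below -/
import Mathlib

section
/- For every positive integer N, set ε = a/N, and let Y : ℝ → ℝ be defined by Y(ξ) = −ξ + ⌊ξ⌋ + 1/2. Then for every continuously differentiable function v : ℝ² → ℝ the following integral identity holds: (εh/2) · Σ_{j=0}^{N−1} ∫_{−l}^{0} [ v(ε(j+(1−h)/2), x₂) + v(ε(j+(1+h)/2), x₂) ] dx₂ = ∫_{G_ε} v(x) dx − ε ∫_{G_ε} Y(x₁/ε) · (∂v/∂x₁)(x) dx. -/
open MeasureTheory Set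

/-! On the `j`-th rod the sawtooth satisfies `ε Y(x₁/ε) = m - x₁`, with `m = ε (j + 1/2)` the
midpoint of the rod. Hence `v - ε Y(x₁/ε) ∂₁v = ∂₁((x₁ - m) v)`, and integrating in `x₁` across the
rod leaves `εh/2` times the sum of the traces of `v` on its two vertical sides. -/

theorem DifferentiableAt.hasDerivAt_partial_fst {E F : Type*} [NormedAddCommGroup E]
    [NormedSpace ℝ E] [NormedAddCommGroup F] [NormedSpace ℝ F] {v : ℝ × E → F} {t : ℝ} {y : E}
    (hv : DifferentiableAt ℝ v (t, y)) :
    HasDerivAt (fun s => v (s, y)) (fderiv ℝ v (t, y) (1, 0)) t :=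
  hv.hasFDerivAt.comp_hasDerivAt t ((hasDerivAt_id t).prodMk (hasDerivAt_const t y))

theorem ContDiff.continuous_fderiv_apply_const {E F : Type*} [NormedAddCommGroup E]
    [NormedSpace ℝ E] [NormedAddCommGroup F] [NormedSpace ℝ F] {f : E → F} (hf : ContDiff ℝ 1 f)
    (w : E) : Continuous fun x => fderiv ℝ f x w :=
  (hf.continuous_fderiv one_ne_zero).clm_apply continuous_const

theorem intervalIntegral.integral_add_sub_mul_deriv_eq {f f' : ℝ → ℝ} {a b : ℝ} (m : ℝ)
    (hf : ∀ t ∈ uIcc a b, HasDerivAt f (f' t) t)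
    (hint : IntervalIntegrable (fun t => f t + (t - m) * f' t) volume a b) :
    ∫ t in a..b, (f t + (t - m) * f' t) = (b - m) * f b - (a - m) * f a := by
  refine integral_eq_sub_of_hasDerivAt (f := fun t => (t - m) * f t) (fun t ht => ?_) hint
  simpa using ((hasDerivAt_id t).sub_const m).fun_mul (hf t ht)

theorem Continuous.integrableOn_Ioo_prod_Ioo {E : Type*} [NormedAddCommGroup E]
    {f : ℝ × ℝ → E} (hf : Continuous f) (a b c d : ℝ) :
    IntegrableOn f (Ioo a b ×ˢ Ioo c d) :=
  hf.integrableOn_Icc.mono_set <| by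
    rw [← Icc_prod_Icc]; exact prod_mono Ioo_subset_Icc_self Ioo_subset_Icc_self

theorem setIntegral_Ioo_prod_Ioo_eq_integral_integral {E : Type*} [NormedAddCommGroup E]
    [NormedSpace ℝ E] {f : ℝ × ℝ → E} {a b c d : ℝ} (hab : a ≤ b) (hcd : c ≤ d)
    (hf : IntegrableOn f (Ioo a b ×ˢ Ioo c d)) :
    ∫ x in Ioo a b ×ˢ Ioo c d, f x = ∫ y in c..d, ∫ x in a..b, f (x, y) := by
  rw [IntegrableOn, Measure.volume_eq_prod, ← Measure.prod_restrict] at hf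
  simp only [intervalIntegral.integral_of_le hab, intervalIntegral.integral_of_le hcd,
    integral_Ioc_eq_integral_Ioo]
  rw [Measure.volume_eq_prod, ← Measure.prod_restrict]
  exact integral_prod_symm f hf

theorem setIntegral_Ioo_prod_Ioo_add_sub_mul_partial_fst {v : ℝ × ℝ → ℝ} (hv : ContDiff ℝ 1 v)
    (m : ℝ) {a b c d : ℝ} (hab : a ≤ b) (hcd : c ≤ d) :
    ∫ x in Ioo a b ×ˢ Ioo c d, (v x + (x.1 - m) * fderiv ℝ v x (1, 0)) =
      ∫ y in c..d, ((b - m) * v (b, y) - (a - m) * v (a, y)) := by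
  have hg : Continuous fun x : ℝ × ℝ => v x + (x.1 - m) * fderiv ℝ v x (1, 0) :=
    hv.continuous.add <|
      (continuous_fst.sub continuous_const).mul (hv.continuous_fderiv_apply_const _)
  rw [setIntegral_Ioo_prod_Ioo_eq_integral_integral hab hcd (hg.integrableOn_Ioo_prod_Ioo ..)]
  refine intervalIntegral.integral_congr fun y _ => ?_
  exact intervalIntegral.integral_add_sub_mul_deriv_eq m
    (fun t _ => (hv.differentiable one_ne_zero _).hasDerivAt_partial_fst)
    ((hg.comp (continuous_id.prodMk continuous_const)).intervalIntegrable a b)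

noncomputable def sawtooth (ξ : ℝ) : ℝ := -ξ + ⌊ξ⌋ + 1 / 2

theorem measurable_sawtooth : Measurable sawtooth := by
  unfold sawtooth; fun_prop

theorem abs_sawtooth_le (ξ : ℝ) : |sawtooth ξ| ≤ 1 / 2 := by
  have := Int.floor_le ξ
  have := Int.lt_floor_add_one ξ
  rw [sawtooth, abs_le]; constructor <;> linarith

theorem sawtooth_eq_of_floor_eq {ξ : ℝ} {n : ℤ} (h : ⌊ξ⌋ = n) : sawtooth ξ = n + 1 / 2 - ξ := by
  rw [sawtooth, h]; ring

theorem integrableOn_sawtooth_mul {g : ℝ × ℝ → ℝ} (hg : Continuous g) (ε a b c d : ℝ) :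
    IntegrableOn (fun x => sawtooth (x.1 / ε) * g x) (Ioo a b ×ˢ Ioo c d) :=
  (hg.integrableOn_Ioo_prod_Ioo a b c d).bdd_mul
    (measurable_sawtooth.comp (measurable_fst.div_const ε)).aestronglyMeasurable
    (c := 1 / 2) (ae_of_all _ fun x => by simpa using abs_sawtooth_le (x.1 / ε))

def rodInterval (ε h : ℝ) (j : ℕ) : Set ℝ := Ioo (ε * (j + (1 - h) / 2)) (ε * (j + (1 + h) / 2))

section rodInterval

variable {ε h : ℝ}

theorem measurableSet_rodInterval (j : ℕ) : MeasurableSet (rodInterval ε h j) :=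
  measurableSet_Ioo

theorem abs_div_sub_lt_iff_mem_rodInterval (hε : 0 < ε) {t : ℝ} {j : ℕ} :
    |t / ε - (j + 1 / 2)| < h / 2 ↔ t ∈ rodInterval ε h j := by
  rw [abs_sub_lt_iff, rodInterval, mem_Ioo, sub_lt_iff_lt_add, sub_lt_comm, div_lt_iff₀ hε,
    lt_div_iff₀ hε]
  constructor <;> rintro ⟨h₁, h₂⟩ <;> constructor <;> linarith

theorem rodInterval_subset_Ico (hε : 0 < ε) (hh : h ≤ 1) (j : ℕ) :
    rodInterval ε h j ⊆ Ico (ε * j) (ε * (j + 1)) := by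
  rintro t ⟨h₁, h₂⟩
  constructor <;> nlinarith

theorem pairwise_disjoint_rodInterval (hε : 0 < ε) (hh : h ≤ 1) :
    Pairwise (Function.onFun Disjoint (rodInterval ε h)) := by
  intro i j hij
  refine disjoint_left.2 fun t hi hj => hij ?_
  obtain ⟨hi₁, hi₂⟩ := rodInterval_subset_Ico hε hh i hi
  obtain ⟨hj₁, hj₂⟩ := rodInterval_subset_Ico hε hh j hj
  have hij : (i : ℝ) < j + 1 := lt_of_mul_lt_mul_left (hi₁.trans_lt hj₂) hε.le
  have hji : (j : ℝ) < i + 1 := lt_of_mul_lt_mul_left (hj₁.trans_lt hi₂) hε.le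
  norm_cast at hij hji
  omega

theorem mul_sawtooth_div_of_mem_rodInterval (hε : 0 < ε) (hh : h ≤ 1) {j : ℕ} {t : ℝ}
    (ht : t ∈ rodInterval ε h j) : ε * sawtooth (t / ε) = ε * (j + 1 / 2) - t := by
  obtain ⟨h₁, h₂⟩ := rodInterval_subset_Ico hε hh j ht
  have : ⌊t / ε⌋ = (j : ℤ) := by
    rw [Int.floor_eq_iff, le_div_iff₀ hε, div_lt_iff₀ hε]; push_cast; constructor <;> linarith
  rw [sawtooth_eq_of_floor_eq this]
  field_simp
  push_cast; ring

end rodInterval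

theorem setIntegral_rod_sub_mul_sawtooth {ε h c d : ℝ} (hε : 0 < ε) (h₀ : 0 ≤ h) (h₁ : h ≤ 1)
    (hcd : c ≤ d) {v : ℝ × ℝ → ℝ} (hv : ContDiff ℝ 1 v) (j : ℕ) :
    (∫ x in rodInterval ε h j ×ˢ Ioo c d, v x) -
        ε * ∫ x in rodInterval ε h j ×ˢ Ioo c d, sawtooth (x.1 / ε) * fderiv ℝ v x (1, 0) =
      ε * h / 2 * ∫ y in c..d,
        (v (ε * ((j : ℝ) + (1 - h) / 2), y) + v (ε * ((j : ℝ) + (1 + h) / 2), y)) := by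
  set m := ε * ((j : ℝ) + 1 / 2)
  have hD := hv.continuous_fderiv_apply_const (1, 0)
  have hsaw : EqOn (fun x : ℝ × ℝ => ε * (sawtooth (x.1 / ε) * fderiv ℝ v x (1, 0)))
      (fun x => -((x.1 - m) * fderiv ℝ v x (1, 0))) (rodInterval ε h j ×ˢ Ioo c d) := by
    rintro x ⟨hx, -⟩
    simp only [← mul_assoc, mul_sawtooth_div_of_mem_rodInterval hε h₁ hx, m]
    ring
  have hab : ε * ((j : ℝ) + (1 - h) / 2) ≤ ε * ((j : ℝ) + (1 + h) / 2) := by nlinarith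
  calc _ = (∫ x in rodInterval ε h j ×ˢ Ioo c d, v x) +
        ∫ x in rodInterval ε h j ×ˢ Ioo c d, (x.1 - m) * fderiv ℝ v x (1, 0) := by
        rw [← integral_const_mul, setIntegral_congr_fun
          ((measurableSet_rodInterval j).prod measurableSet_Ioo) hsaw, integral_neg, sub_neg_eq_add]
    _ = ∫ x in rodInterval ε h j ×ˢ Ioo c d, (v x + (x.1 - m) * fderiv ℝ v x (1, 0)) :=
        (integral_add (hv.continuous.integrableOn_Ioo_prod_Ioo ..)
          (((continuous_fst.sub continuous_const).mul hD).integrableOn_Ioo_prod_Ioo ..)).symm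
    _ = _ := by
        rw [rodInterval, setIntegral_Ioo_prod_Ioo_add_sub_mul_partial_fst hv m hab hcd,
          ← intervalIntegral.integral_const_mul]
        congr 1 with y
        ring

/-- The special integral identity (Lemma 1 of Mel'nyk's method): for the thick-junction rods
`G_ε`, the boundary integral over the vertical sides of the rods equals a volume integral
minus `ε` times a weighted integral of the `x₁`-derivative. -/
theorem signorini_integral_identity
    (a l h : ℝ) (ha : 0 < a) (hl : 0 < l) (hh : h ∈ Set.Ioo (0 : ℝ) 1)
    (N : ℕ) (hN : 0 < N) (ε : ℝ) (hε : ε = a / N)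
    (Y : ℝ → ℝ) (hY : ∀ ξ : ℝ, Y ξ = -ξ + ⌊ξ⌋ + 1 / 2)
    (Gε : Set (ℝ × ℝ))
    (hG : Gε = ⋃ j ∈ Finset.range N,
      {x : ℝ × ℝ | |x.1 / ε - ((j : ℝ) + 1 / 2)| < h / 2 ∧ x.2 ∈ Set.Ioo (-l) 0})
    (v : ℝ × ℝ → ℝ) (hv : ContDiff ℝ 1 v) :
    ε * h / 2 *
        ∑ j ∈ Finset.range N,
          ∫ x₂ in (-l)..0,
            (v (ε * ((j : ℝ) + (1 - h) / 2), x₂) + v (ε * ((j : ℝ) + (1 + h) / 2), x₂)) =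
      (∫ x in Gε, v x) - ε * ∫ x in Gε, Y (x.1 / ε) * fderiv ℝ v x (1, 0) := by
  obtain ⟨h₀, h₁⟩ := hh
  have hε₀ : 0 < ε := hε ▸ by positivity
  obtain rfl : Y = sawtooth := funext hY
  have hGε : Gε = ⋃ j ∈ Finset.range N, rodInterval ε h j ×ˢ Ioo (-l) 0 := by
    simp_rw [hG, abs_div_sub_lt_iff_mem_rodInterval hε₀]
    rfl
  have hdisj : Pairwise (Function.onFun Disjoint fun j => rodInterval ε h j ×ˢ Ioo (-l) 0) :=
    fun i j hij => (pairwise_disjoint_rodInterval hε₀ h₁.le hij).set_prod_left _ _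
  have hmeas j (_ : j ∈ Finset.range N) : MeasurableSet (rodInterval ε h j ×ˢ Ioo (-l) 0) :=
    (measurableSet_rodInterval j).prod measurableSet_Ioo
  rw [hGε, integral_biUnion_finset _ hmeas (hdisj.set_pairwise _)
      fun j _ => hv.continuous.integrableOn_Ioo_prod_Ioo ..,
    integral_biUnion_finset _ hmeas (hdisj.set_pairwise _)
      fun j _ => integrableOn_sawtooth_mul (hv.continuous_fderiv_apply_const _) ..,
    Finset.mul_sum, Finset.mul_sum, ← Finset.sum_sub_distrib]
  exact Finset.sum_congr rfl fun j _ =>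
    (setIntegral_rod_sub_mul_sawtooth hε₀ h₀.le h₁.le (by linarith) hv j).symm
end

section
/- There exists a constant C > 0, depending only on a, l and h (and in particular independent of N), such that for every positive integer N (with ε = a/N) and every continuously differentiable function v : ℝ² → ℝ one has Σ_{j=0}^{N−1} ∫_{−l}^{0} [ v(ε(j+(1−h)/2), x₂)² + v(ε(j+(1+h)/2), x₂)² ] dx₂ ≤ C ε^{−1} ∫_{G_ε} ( v(x)² + ‖∇v(x)‖² ) dx. (This is the trace estimate ‖v‖_{L²(S_ε)} ≤ C₁ ε^{−1/2} ‖v‖_{H¹(G_ε)}.) -/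
/-!
For `g` of class `C¹` and `t ∈ [α, β]`, the fundamental theorem of calculus and
`2|g g'| ≤ g² + g'²` give `g(α)² + g(β)² ≤ 2 g(t)² + 2 ∫ (g² + g'²)`; averaging over `t` yields
the one-dimensional trace inequality with constant `2 / (β - α) + 2`. Applying it on each
horizontal slice of a rod, where `β - α = ε h`, integrating in `x₂` (Fubini) and summing over the
pairwise disjoint rods gives the estimate, since `2 / (ε h) + 2 ≤ (2 / h + 2 a) ε⁻¹` for `ε ≤ a`.
-/

open MeasureTheory Set Function

section OneDimensional

variable {g : ℝ → ℝ} {α β : ℝ}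

lemma abs_sq_sub_sq_le_integral (hg : ContDiff ℝ 1 g) {p q : ℝ}
    (hαp : α ≤ p) (hpq : p ≤ q) (hqβ : q ≤ β) :
    |g q ^ 2 - g p ^ 2| ≤ ∫ t in α..β, (g t ^ 2 + deriv g t ^ 2) := by
  have hderiv : ∀ t, HasDerivAt (fun s => g s ^ 2) (2 * g t * deriv g t) t := fun t => by
    simpa using ((hg.differentiable one_ne_zero t).hasDerivAt).fun_pow 2
  rw [← intervalIntegral.integral_eq_sub_of_hasDerivAt (fun t _ => hderiv t)
    ((by fun_prop : Continuous fun t => 2 * g t * deriv g t).intervalIntegrable p q)]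
  calc |∫ t in p..q, 2 * g t * deriv g t|
      ≤ ∫ t in p..q, |2 * g t * deriv g t| := intervalIntegral.abs_integral_le_integral_abs hpq
    _ ≤ ∫ t in p..q, (g t ^ 2 + deriv g t ^ 2) := by
        refine intervalIntegral.integral_mono_on hpq
          (Continuous.intervalIntegrable (by fun_prop) _ _)
          (Continuous.intervalIntegrable (by fun_prop) _ _) fun t _ => ?_
        simpa [abs_mul, sq_abs, mul_assoc] using two_mul_le_add_sq |g t| |deriv g t|
    _ ≤ ∫ t in α..β, (g t ^ 2 + deriv g t ^ 2) :=
        intervalIntegral.integral_mono_interval hαp hpq hqβ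
          (Filter.Eventually.of_forall fun t => by positivity)
          (Continuous.intervalIntegrable (by fun_prop) _ _)

theorem sq_add_sq_le_integral (hg : ContDiff ℝ 1 g) (hαβ : α < β) :
    g α ^ 2 + g β ^ 2 ≤
      2 / (β - α) * (∫ t in α..β, g t ^ 2) + 2 * ∫ t in α..β, (g t ^ 2 + deriv g t ^ 2) := by
  set K := ∫ t in α..β, (g t ^ 2 + deriv g t ^ 2)
  have hpoint : ∀ t ∈ Icc α β, g α ^ 2 + g β ^ 2 ≤ 2 * g t ^ 2 + 2 * K := fun t ht => by
    have hα := abs_sq_sub_sq_le_integral hg le_rfl ht.1 ht.2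
    have hβ := abs_sq_sub_sq_le_integral hg ht.1 ht.2 le_rfl
    linarith [le_abs_self (g β ^ 2 - g t ^ 2), neg_abs_le (g t ^ 2 - g α ^ 2)]
  have havg : (β - α) * (g α ^ 2 + g β ^ 2) ≤ 2 * (∫ t in α..β, g t ^ 2) + (β - α) * (2 * K) := by
    have := intervalIntegral.integral_mono_on hαβ.le (intervalIntegrable_const (μ := volume))
      ((by fun_prop : Continuous fun t => 2 * g t ^ 2 + 2 * K).intervalIntegrable α β) hpoint
    rwa [intervalIntegral.integral_const, intervalIntegral.integral_add
      ((by fun_prop : Continuous fun t => 2 * g t ^ 2).intervalIntegrable α β)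
      intervalIntegrable_const,
      intervalIntegral.integral_const, intervalIntegral.integral_const_mul, smul_eq_mul,
      smul_eq_mul] at this
  have hβα : 0 < β - α := sub_pos.2 hαβ
  rw [div_mul_eq_mul_div, ← sub_le_iff_le_add, le_div_iff₀ hβα]
  linarith

end OneDimensional

lemma norm_deriv_comp_prodMk_le {F : Type*} [NormedAddCommGroup F] [NormedSpace ℝ F]
    {v : ℝ × ℝ → F} {x y : ℝ} (hv : DifferentiableAt ℝ v (x, y)) :
    ‖deriv (fun s => v (s, y)) x‖ ≤ ‖fderiv ℝ v (x, y)‖ := by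
  have hline : HasDerivAt (fun s : ℝ => (s, y)) ((1 : ℝ), (0 : ℝ)) x :=
    (hasDerivAt_id x).prodMk (hasDerivAt_const x y)
  have hpartial : HasDerivAt (fun s => v (s, y)) (fderiv ℝ v (x, y) (1, 0)) x :=
    hv.hasFDerivAt.comp_hasDerivAt x hline
  rw [hpartial.deriv]
  simpa using (fderiv ℝ v (x, y)).le_opNorm ((1 : ℝ), (0 : ℝ))

lemma Continuous.integrableOn_Ioo_prod_Ioo_s1 {E : Type*} [NormedAddCommGroup E]
    {F : ℝ × ℝ → E} (hF : Continuous F) (α β γ δ : ℝ) : IntegrableOn F (Ioo α β ×ˢ Ioo γ δ) :=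
  (hF.continuousOn.integrableOn_compact (isCompact_Icc.prod isCompact_Icc)).mono_set
    (prod_mono Ioo_subset_Icc_self Ioo_subset_Icc_self)

lemma integral_Ioo_prod_Ioo_eq_intervalIntegral {F : ℝ × ℝ → ℝ} (hF : Continuous F)
    {α β γ δ : ℝ} (hαβ : α ≤ β) (hγδ : γ ≤ δ) :
    ∫ z in Ioo α β ×ˢ Ioo γ δ, F z = ∫ y in γ..δ, ∫ x in α..β, F (x, y) := by
  rw [Measure.volume_eq_prod, ← setIntegral_prod_swap,
    setIntegral_prod (fun z => F z.swap)
      ((hF.comp continuous_swap).integrableOn_Ioo_prod_Ioo_s1 γ δ α β),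
    intervalIntegral.integral_of_le hγδ, integral_Ioc_eq_integral_Ioo]
  refine setIntegral_congr_fun measurableSet_Ioo fun y _ => ?_
  rw [intervalIntegral.integral_of_le hαβ, integral_Ioc_eq_integral_Ioo]
  rfl

theorem integral_sq_add_sq_sides_le_integral_Ioo_prod_Ioo {v : ℝ × ℝ → ℝ} (hv : ContDiff ℝ 1 v)
    {α β γ δ : ℝ} (hαβ : α < β) (hγδ : γ ≤ δ) :
    ∫ y in γ..δ, (v (α, y) ^ 2 + v (β, y) ^ 2) ≤
      (2 / (β - α) + 2) * ∫ z in Ioo α β ×ˢ Ioo γ δ, (v z ^ 2 + ‖fderiv ℝ v z‖ ^ 2) := by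
  set F : ℝ × ℝ → ℝ := fun z => v z ^ 2 + ‖fderiv ℝ v z‖ ^ 2
  have hFc : Continuous F := by
    have := hv.continuous_fderiv one_ne_zero
    fun_prop
  have hslice : ∀ y, v (α, y) ^ 2 + v (β, y) ^ 2 ≤ (2 / (β - α) + 2) * ∫ x in α..β, F (x, y) := by
    intro y
    have hg : ContDiff ℝ 1 fun x => v (x, y) := hv.comp (contDiff_id.prodMk contDiff_const)
    have hderiv : ∀ x, deriv (fun x => v (x, y)) x ^ 2 ≤ ‖fderiv ℝ v (x, y)‖ ^ 2 := fun x => by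
      simpa only [Real.norm_eq_abs, sq_abs] using pow_le_pow_left₀ (norm_nonneg _)
        (norm_deriv_comp_prodMk_le (hv.differentiable one_ne_zero (x, y))) 2
    have hFy : Continuous fun x => F (x, y) := by fun_prop
    have hv_le : ∫ x in α..β, v (x, y) ^ 2 ≤ ∫ x in α..β, F (x, y) :=
      intervalIntegral.integral_mono_on hαβ.le (Continuous.intervalIntegrable (by fun_prop) _ _)
        (hFy.intervalIntegrable _ _) fun x _ => le_add_of_nonneg_right (by positivity)
    have hH1_le : ∫ x in α..β, (v (x, y) ^ 2 + deriv (fun x => v (x, y)) x ^ 2) ≤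
        ∫ x in α..β, F (x, y) :=
      intervalIntegral.integral_mono_on hαβ.le (Continuous.intervalIntegrable (by fun_prop) _ _)
        (hFy.intervalIntegrable _ _) fun x _ => (add_le_add_iff_left _).2 (hderiv x)
    calc v (α, y) ^ 2 + v (β, y) ^ 2
        ≤ 2 / (β - α) * (∫ x in α..β, v (x, y) ^ 2) +
            2 * ∫ x in α..β, (v (x, y) ^ 2 + deriv (fun x => v (x, y)) x ^ 2) :=
          sq_add_sq_le_integral hg hαβ
      _ ≤ 2 / (β - α) * (∫ x in α..β, F (x, y)) + 2 * ∫ x in α..β, F (x, y) := by gcongr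
      _ = (2 / (β - α) + 2) * ∫ x in α..β, F (x, y) := by ring
  have hmarginal : Continuous fun y => ∫ x in α..β, F (x, y) :=
    intervalIntegral.continuous_parametric_intervalIntegral_of_continuous'
      (f := fun y x => F (x, y)) (hFc.comp continuous_swap) α β
  calc ∫ y in γ..δ, (v (α, y) ^ 2 + v (β, y) ^ 2)
      ≤ ∫ y in γ..δ, (2 / (β - α) + 2) * ∫ x in α..β, F (x, y) :=
        intervalIntegral.integral_mono_on hγδ (Continuous.intervalIntegrable (by fun_prop) _ _)
          ((hmarginal.const_mul _).intervalIntegrable _ _) fun y _ => hslice y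
    _ = (2 / (β - α) + 2) * ∫ z in Ioo α β ×ˢ Ioo γ δ, F z := by
        rw [intervalIntegral.integral_const_mul,
          integral_Ioo_prod_Ioo_eq_intervalIntegral hFc hαβ.le hγδ]

lemma abs_div_sub_lt_iff_mem_Ioo {ε t c r : ℝ} (hε : 0 < ε) :
    |t / ε - c| < r ↔ t ∈ Ioo (ε * (c - r)) (ε * (c + r)) := by
  rw [abs_sub_lt_iff, mem_Ioo, sub_lt_iff_lt_add', sub_lt_comm, div_lt_iff₀' hε, lt_div_iff₀' hε,
    and_comm]

lemma setOf_rod_eq_Ioo_prod {ε : ℝ} (hε : 0 < ε) (h l : ℝ) (j : ℕ) :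
    {x : ℝ × ℝ | |x.1 / ε - ((j : ℝ) + 1 / 2)| < h / 2 ∧ x.2 ∈ Ioo (-l) 0} =
      Ioo (ε * (j + (1 - h) / 2)) (ε * (j + (1 + h) / 2)) ×ˢ Ioo (-l) 0 := by
  ext x
  rw [mem_ofPred_eq, mem_prod, abs_div_sub_lt_iff_mem_Ioo hε, show (j : ℝ) + 1 / 2 - h / 2 =
    j + (1 - h) / 2 by ring, show (j : ℝ) + 1 / 2 + h / 2 = j + (1 + h) / 2 by ring]

lemma pairwise_disjoint_Ioo_rods {ε h : ℝ} (hε : 0 ≤ ε) (hh : h ≤ 1) :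
    Pairwise (Disjoint on fun j : ℕ => Ioo (ε * (j + (1 - h) / 2)) (ε * (j + (1 + h) / 2))) := by
  refine (pairwise_disjoint_on _).2 fun m n hmn => Set.disjoint_left.2 fun x hxm hxn => ?_
  have hgap : (m : ℝ) + 1 ≤ n := by exact_mod_cast hmn
  have : ε * (m + (1 + h) / 2) ≤ ε * (n + (1 - h) / 2) :=
    mul_le_mul_of_nonneg_left (by linarith) hε
  linarith [hxm.2, hxn.1]

/-- Uniform trace estimate `‖v‖²_{L²(S_ε)} ≤ C ε⁻¹ ‖v‖²_{H¹(G_ε)}` on the vertical sides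
of the thin rods, with a constant depending only on `a`, `l`, `h`. -/
theorem signorini_trace_estimate
    (a l h : ℝ) (ha : 0 < a) (hl : 0 < l) (hh : h ∈ Set.Ioo (0 : ℝ) 1) :
    ∃ C : ℝ, 0 < C ∧
      ∀ (N : ℕ), 0 < N →
        ∀ ε : ℝ, ε = a / N →
          ∀ Gε : Set (ℝ × ℝ),
            Gε = ⋃ j ∈ Finset.range N,
              {x : ℝ × ℝ | |x.1 / ε - ((j : ℝ) + 1 / 2)| < h / 2 ∧ x.2 ∈ Set.Ioo (-l) 0} →
            ∀ v : ℝ × ℝ → ℝ, ContDiff ℝ 1 v →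
              ∑ j ∈ Finset.range N,
                  ∫ x₂ in (-l)..0,
                    ((v (ε * ((j : ℝ) + (1 - h) / 2), x₂)) ^ 2 +
                      (v (ε * ((j : ℝ) + (1 + h) / 2), x₂)) ^ 2) ≤
                C * ε⁻¹ * ∫ x in Gε, ((v x) ^ 2 + ‖fderiv ℝ v x‖ ^ 2) := by
  obtain ⟨hh0, hh1⟩ := hh
  refine ⟨2 / h + 2 * a, by positivity, fun N hN ε hεN Gε hG v hv => ?_⟩
  have hε : 0 < ε := hεN ▸ div_pos ha (Nat.cast_pos.2 hN)
  have hεa : ε ≤ a := hεN ▸ div_le_self ha.le (Nat.one_le_cast.2 hN)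
  have hFc : Continuous fun x => v x ^ 2 + ‖fderiv ℝ v x‖ ^ 2 := by
    have := hv.continuous_fderiv one_ne_zero
    fun_prop
  have hconst : ∀ j : ℕ, 2 / (ε * (j + (1 + h) / 2) - ε * (j + (1 - h) / 2)) + 2 ≤
      (2 / h + 2 * a) * ε⁻¹ := fun j => by
    rw [show ε * (j + (1 + h) / 2) - ε * (j + (1 - h) / 2) = ε * h by ring]
    field_simp
    nlinarith
  rw [hG, iUnion₂_congr fun j _ => setOf_rod_eq_Ioo_prod hε h l j,
    integral_biUnion_finset _ (fun j _ => measurableSet_Ioo.prod measurableSet_Ioo)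
      (((pairwise_disjoint_Ioo_rods hε.le hh1.le).mono
        fun i j hij => disjoint_prod.2 (Or.inl hij)).set_pairwise _)
      (fun j _ => hFc.integrableOn_Ioo_prod_Ioo_s1 _ _ _ _),
    Finset.mul_sum]
  refine Finset.sum_le_sum fun j _ => ?_
  calc _ ≤ _ := integral_sq_add_sq_sides_le_integral_Ioo_prod_Ioo hv
          (mul_lt_mul_of_pos_left (by linarith) hε) (neg_nonpos.2 hl.le)
    _ ≤ _ := mul_le_mul_of_nonneg_right (hconst j)
          (setIntegral_nonneg (measurableSet_Ioo.prod measurableSet_Ioo) fun x _ => by positivity)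
end

section
/- There exists a constant C₀ > 0, depending only on a, l and γ, such that for every continuously differentiable function u : ℝ² → ℝ satisfying u(x₁, −l) = 0 for all x₁ ∈ [0,a], one has ∫_{Ω₁} u(x)² dx ≤ C₀ ( ∫_{Ω₀} ‖∇u(x)‖² dx + ∫_{D₀} (∂u/∂x₂)(x)² dx ). -/
/-!
Along each vertical line `x₁ = const` the function `u` vanishes at the bottom `x₂ = -l`, so by the
fundamental theorem of calculus and Cauchy–Schwarz, `u(x₁, x₂)² ≤ (M + l) ∫ (∂₂u)²`, the integral
taken over the whole vertical segment from `-l` to `γ(x₁)`, where `M ≥ γ`. Integrating along the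
segment and then over `x₁` (Fubini) gives the inequality with `C₀ = (M + l)²` and only `∂₂u` on the
right; on `Ω₀` one then bounds `∂₂u` by the full gradient. The interface `x₂ = 0` is a null set.
-/

open MeasureTheory Set

theorem sq_setIntegral_le_measureReal_mul_setIntegral_sq {α : Type*} [MeasurableSpace α]
    {μ : Measure α} {s : Set α} {f : α → ℝ} (hs : μ s ≠ ⊤) (hf : IntegrableOn f s μ)
    (hf2 : IntegrableOn (fun x => f x ^ 2) s μ) :
    (∫ x in s, f x ∂μ) ^ 2 ≤ μ.real s * ∫ x in s, f x ^ 2 ∂μ := by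
  rcases eq_or_ne (μ s) 0 with h0 | h0
  · simp [Measure.restrict_eq_zero.2 h0]
  have jensen := (Even.convexOn_pow (n := 2) even_two).map_set_average_le
    (continuousOn_pow 2) isClosed_univ h0 hs (Filter.Eventually.of_forall fun _ => mem_univ _)
    hf hf2
  rw [setAverage_eq, setAverage_eq, smul_eq_mul, smul_eq_mul] at jensen
  have hm : μ.real s ≠ 0 := (ENNReal.toReal_pos h0 hs).ne'
  calc (∫ x in s, f x ∂μ) ^ 2 = μ.real s ^ 2 * ((μ.real s)⁻¹ * ∫ x in s, f x ∂μ) ^ 2 := by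
        field_simp
    _ ≤ μ.real s ^ 2 * ((μ.real s)⁻¹ * ∫ x in s, f x ^ 2 ∂μ) := by gcongr
    _ = μ.real s * ∫ x in s, f x ^ 2 ∂μ := by field_simp

theorem sq_le_mul_setIntegral_deriv_sq {v : ℝ → ℝ} (hv : ContDiff ℝ 1 v) {c x : ℝ}
    (hvc : v c = 0) (hcx : c ≤ x) :
    v x ^ 2 ≤ (x - c) * ∫ t in Ioo c x, deriv v t ^ 2 := by
  have hv' : Continuous (deriv v) := hv.continuous_deriv le_rfl
  have ftc : v x = ∫ t in Ioo c x, deriv v t := by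
    rw [← integral_Ioc_eq_integral_Ioo, ← intervalIntegral.integral_of_le hcx,
      intervalIntegral.integral_deriv_eq_sub (fun t _ => hv.differentiable one_ne_zero t)
        (hv'.intervalIntegrable c x), hvc, sub_zero]
  rw [ftc, ← Real.volume_real_Ioo_of_le hcx]
  exact sq_setIntegral_le_measureReal_mul_setIntegral_sq measure_Ioo_lt_top.ne
    (hv'.integrableOn_Icc.mono_set Ioo_subset_Icc_self)
    ((hv'.pow 2).integrableOn_Icc.mono_set Ioo_subset_Icc_self)

theorem setIntegral_Ioo_sq_le_of_eq_zero_left {v : ℝ → ℝ} (hv : ContDiff ℝ 1 v) {c d L : ℝ}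
    (hvc : v c = 0) (hdL : d - c ≤ L) :
    ∫ y in Ioo c d, v y ^ 2 ≤ L ^ 2 * ∫ y in Ioo c d, deriv v y ^ 2 := by
  set E := ∫ y in Ioo c d, deriv v y ^ 2
  have hE : 0 ≤ E := setIntegral_nonneg measurableSet_Ioo fun _ _ => sq_nonneg _
  rcases le_or_gt d c with hdc | hcd
  · rw [Ioo_eq_empty (not_lt.2 hdc), Measure.restrict_empty, integral_zero_measure]
    positivity
  have hL : 0 ≤ L := by linarith
  have hv' : Continuous (deriv v) := hv.continuous_deriv le_rfl
  have hpt : ∀ y ∈ Ioo c d, v y ^ 2 ≤ L * E := fun y hy => calc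
    v y ^ 2 ≤ (y - c) * ∫ t in Ioo c y, deriv v t ^ 2 :=
      sq_le_mul_setIntegral_deriv_sq hv hvc hy.1.le
    _ ≤ L * E := by
      refine mul_le_mul (by linarith [hy.2]) ?_
        (setIntegral_nonneg measurableSet_Ioo fun _ _ => sq_nonneg _) hL
      exact setIntegral_mono_set ((hv'.pow 2).integrableOn_Icc.mono_set Ioo_subset_Icc_self)
        (Filter.Eventually.of_forall fun _ => sq_nonneg _)
        (Ioo_subset_Ioo_right hy.2.le).eventuallyLE
  calc ∫ y in Ioo c d, v y ^ 2 ≤ ∫ _ in Ioo c d, L * E :=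
        setIntegral_mono_on ((hv.continuous.pow 2).integrableOn_Icc.mono_set Ioo_subset_Icc_self)
          (integrableOn_const measure_Ioo_lt_top.ne) measurableSet_Ioo hpt
    _ = (d - c) * (L * E) := by
        rw [setIntegral_const, Real.volume_real_Ioo_of_le hcd.le, smul_eq_mul]
    _ ≤ L ^ 2 * E := by nlinarith [mul_nonneg hL hE]

theorem Continuous.integrableOn_of_isBounded {X E : Type*} [MetricSpace X] [ProperSpace X]
    [MeasurableSpace X] [OpensMeasurableSpace X] {μ : Measure X} [IsFiniteMeasureOnCompacts μ]
    [NormedAddCommGroup E] {φ : X → E} (hφ : Continuous φ) {s : Set X} (hs : Bornology.IsBounded s) :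
    IntegrableOn φ s μ :=
  (hφ.continuousOn.integrableOn_compact hs.isCompact_closure).mono_set subset_closure

section RegionBetween

variable {α : Type*} {f g k : α → ℝ} {s : Set α}

theorem regionBetween_congr {f' g' : α → ℝ} (hf : EqOn f f' s) (hg : EqOn g g' s) :
    regionBetween f g s = regionBetween f' g' s := by
  ext p
  simp only [regionBetween, mem_ofPred_eq, mem_Ioo]
  constructor <;> rintro ⟨hx, hfy, hyg⟩
  · exact ⟨hx, hf hx ▸ hfy, hg hx ▸ hyg⟩
  · exact ⟨hx, (hf hx).symm ▸ hfy, (hg hx).symm ▸ hyg⟩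

theorem integral_indicator_regionBetween_slice {h : α × ℝ → ℝ} (x : α) :
    ∫ y, (regionBetween f g s).indicator h (x, y) =
      s.indicator (fun x => ∫ y in Ioo (f x) (g x), h (x, y)) x := by
  by_cases hx : x ∈ s
  · rw [indicator_of_mem hx, ← integral_indicator measurableSet_Ioo]
    congr 1 with y
    simp only [indicator, regionBetween, mem_ofPred_eq, hx, true_and]
  · simp [indicator, regionBetween, hx]

variable [MeasurableSpace α] {μ : Measure α}

theorem MeasureTheory.IntegrableOn.integrableOn_integral_regionBetween (hf : Measurable f)
    (hg : Measurable g) (hs : MeasurableSet s) {h : α × ℝ → ℝ}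
    (hh : IntegrableOn h (regionBetween f g s) (μ.prod volume)) :
    IntegrableOn (fun x => ∫ y in Ioo (f x) (g x), h (x, y)) s μ := by
  have := ((integrable_indicator_iff (measurableSet_regionBetween hf hg hs)).2 hh).integral_prod_left
  simp_rw [integral_indicator_regionBetween_slice] at this
  exact (integrable_indicator_iff hs).1 this

theorem prod_volume_graph_eq_zero (hg : Measurable g) :
    (μ.prod volume) {p : α × ℝ | p.2 = g p.1} = 0 := by
  have hm : MeasurableSet {p : α × ℝ | p.2 = g p.1} :=
    measurableSet_eq_fun measurable_snd (hg.comp measurable_fst)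
  rw [Measure.measure_prod_null hm]
  refine Filter.Eventually.of_forall fun x => ?_
  simp [preimage]

theorem regionBetween_union_regionBetween_ae_eq (hg : Measurable g)
    (hfg : ∀ x ∈ s, f x ≤ g x) (hgk : ∀ x ∈ s, g x ≤ k x) :
    (regionBetween g k s ∪ regionBetween f g s : Set (α × ℝ)) =ᵐ[μ.prod volume]
      regionBetween f k s := by
  refine ae_eq_set.2 ⟨?_, measure_mono_null ?_ (prod_volume_graph_eq_zero hg)⟩
  · rw [sdiff_eq_empty.2, measure_empty]
    rintro p (⟨hx, hgy, hyk⟩ | ⟨hx, hfy, hyg⟩)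
    · exact ⟨hx, (hfg _ hx).trans_lt hgy, hyk⟩
    · exact ⟨hx, hfy, hyg.trans_le (hgk _ hx)⟩
  · rintro p ⟨⟨hx, hfy, hyk⟩, hp⟩
    by_contra hne
    rcases lt_or_gt_of_ne hne with hlt | hgt
    · exact hp (Or.inr ⟨hx, hfy, hlt⟩)
    · exact hp (Or.inl ⟨hx, hgt, hyk⟩)

theorem setIntegral_regionBetween_eq_add (hf : Measurable f) (hg : Measurable g)
    (hs : MeasurableSet s) (hfg : ∀ x ∈ s, f x ≤ g x) (hgk : ∀ x ∈ s, g x ≤ k x)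
    {h : α × ℝ → ℝ} (hh : IntegrableOn h (regionBetween f k s) (μ.prod volume)) :
    ∫ p in regionBetween f k s, h p ∂μ.prod volume =
      (∫ p in regionBetween g k s, h p ∂μ.prod volume) +
        ∫ p in regionBetween f g s, h p ∂μ.prod volume := by
  have hunion := regionBetween_union_regionBetween_ae_eq (μ := μ) hg hfg hgk
  have hdisj : Disjoint (regionBetween g k s) (regionBetween f g s) :=
    disjoint_left.2 fun _ hgk hfg => hgk.2.1.not_gt hfg.2.2
  have hh' := hh.congr_set_ae hunion
  rw [← setIntegral_congr_set hunion, setIntegral_union hdisj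
    (measurableSet_regionBetween hf hg hs) (hh'.mono_set subset_union_left)
    (hh'.mono_set subset_union_right)]

theorem setIntegral_regionBetween [SFinite μ] (hf : Measurable f) (hg : Measurable g)
    (hs : MeasurableSet s) {h : α × ℝ → ℝ}
    (hh : IntegrableOn h (regionBetween f g s) (μ.prod volume)) :
    ∫ p in regionBetween f g s, h p ∂μ.prod volume =
      ∫ x in s, (∫ y in Ioo (f x) (g x), h (x, y)) ∂μ := by
  have hR := measurableSet_regionBetween hf hg hs
  rw [← integral_indicator hR, integral_prod _ ((integrable_indicator_iff hR).2 hh)]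
  simp_rw [integral_indicator_regionBetween_slice]
  exact integral_indicator hs

theorem setIntegral_regionBetween_sq_le [SFinite μ] {u : α × ℝ → ℝ}
    (hu : ∀ x ∈ s, ContDiff ℝ 1 fun t => u (x, t)) (hf : Measurable f) (hg : Measurable g)
    (hs : MeasurableSet s) {L : ℝ} (hgL : ∀ x ∈ s, g x - f x ≤ L)
    (hu0 : ∀ x ∈ s, u (x, f x) = 0)
    (hu2 : IntegrableOn (fun p => u p ^ 2) (regionBetween f g s) (μ.prod volume))
    (hdu2 : IntegrableOn (fun p => deriv (fun t => u (p.1, t)) p.2 ^ 2) (regionBetween f g s)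
      (μ.prod volume)) :
    ∫ p in regionBetween f g s, u p ^ 2 ∂μ.prod volume ≤
      L ^ 2 * ∫ p in regionBetween f g s, deriv (fun t => u (p.1, t)) p.2 ^ 2 ∂μ.prod volume := by
  rw [setIntegral_regionBetween hf hg hs hu2, setIntegral_regionBetween hf hg hs hdu2,
    ← integral_const_mul]
  exact setIntegral_mono_on (hu2.integrableOn_integral_regionBetween hf hg hs)
    ((hdu2.integrableOn_integral_regionBetween hf hg hs).const_mul _) hs fun x hx =>
      setIntegral_Ioo_sq_le_of_eq_zero_left (hu x hx) (hu0 x hx) (hgL x hx)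

end RegionBetween

theorem deriv_comp_prodMk_right {u : ℝ × ℝ → ℝ} {x y : ℝ} (hu : DifferentiableAt ℝ u (x, y)) :
    deriv (fun t => u (x, t)) y = fderiv ℝ u (x, y) (0, 1) :=
  (hu.hasFDerivAt.comp_hasDerivAt y ((hasDerivAt_const y x).prodMk (hasDerivAt_id y))).deriv

section Plane

variable {u : ℝ × ℝ → ℝ} {f g k : ℝ → ℝ} {s : Set ℝ}

theorem setIntegral_regionBetween_sq_le_fderiv (hu : ContDiff ℝ 1 u) (hf : Measurable f)
    (hg : Measurable g) (hs : MeasurableSet s) (hbdd : Bornology.IsBounded (regionBetween f g s))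
    {L : ℝ} (hgL : ∀ x ∈ s, g x - f x ≤ L) (hu0 : ∀ x ∈ s, u (x, f x) = 0) :
    ∫ p in regionBetween f g s, u p ^ 2 ≤
      L ^ 2 * ∫ p in regionBetween f g s, fderiv ℝ u p (0, 1) ^ 2 := by
  have hdu : ∀ p : ℝ × ℝ, deriv (fun t => u (p.1, t)) p.2 = fderiv ℝ u p (0, 1) := fun p =>
    deriv_comp_prodMk_right (hu.differentiable one_ne_zero p)
  have hdcont : Continuous fun p => fderiv ℝ u p (0, 1) :=
    (hu.continuous_fderiv one_ne_zero).clm_apply continuous_const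
  have key := setIntegral_regionBetween_sq_le (μ := volume)
    (fun x _ => hu.comp (contDiff_prodMk_right x)) hf hg hs hgL hu0
    ((hu.continuous.pow 2).integrableOn_of_isBounded hbdd)
    (by simp_rw [hdu]; exact (hdcont.pow 2).integrableOn_of_isBounded hbdd)
  simp_rw [hdu] at key
  exact key

theorem sq_fderiv_apply_snd_le (u : ℝ × ℝ → ℝ) (p : ℝ × ℝ) :
    fderiv ℝ u p (0, 1) ^ 2 ≤ ‖fderiv ℝ u p‖ ^ 2 := by
  have h := (fderiv ℝ u p).unit_le_opNorm (0, 1) (by simp [Prod.norm_def])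
  rw [Real.norm_eq_abs] at h
  exact sq_le_sq.2 (h.trans (le_abs_self _))

theorem setIntegral_regionBetween_union_sq_le (hu : ContDiff ℝ 1 u) (hf : Measurable f)
    (hg : Measurable g) (hk : Measurable k) (hs : MeasurableSet s)
    (hfg : ∀ x ∈ s, f x ≤ g x) (hgk : ∀ x ∈ s, g x ≤ k x)
    (hbdd : Bornology.IsBounded (regionBetween f k s)) {L : ℝ} (hkL : ∀ x ∈ s, k x - f x ≤ L)
    (hu0 : ∀ x ∈ s, u (x, f x) = 0) :
    ∫ p in regionBetween g k s ∪ regionBetween f g s, u p ^ 2 ≤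
      L ^ 2 * ((∫ p in regionBetween g k s, ‖fderiv ℝ u p‖ ^ 2) +
        ∫ p in regionBetween f g s, fderiv ℝ u p (0, 1) ^ 2) := by
  have hdcont : Continuous fun p => fderiv ℝ u p (0, 1) ^ 2 :=
    ((hu.continuous_fderiv one_ne_zero).clm_apply continuous_const).pow 2
  have hupper : Bornology.IsBounded (regionBetween g k s) :=
    hbdd.subset fun p ⟨hx, hgy, hyk⟩ => ⟨hx, (hfg _ hx).trans_lt hgy, hyk⟩
  calc ∫ p in regionBetween g k s ∪ regionBetween f g s, u p ^ 2
      = ∫ p in regionBetween f k s, u p ^ 2 :=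
        setIntegral_congr_set (regionBetween_union_regionBetween_ae_eq hg hfg hgk)
    _ ≤ L ^ 2 * ∫ p in regionBetween f k s, fderiv ℝ u p (0, 1) ^ 2 :=
        setIntegral_regionBetween_sq_le_fderiv hu hf hk hs hbdd hkL hu0
    _ = L ^ 2 * ((∫ p in regionBetween g k s, fderiv ℝ u p (0, 1) ^ 2) +
          ∫ p in regionBetween f g s, fderiv ℝ u p (0, 1) ^ 2) := by
        congr 1
        exact setIntegral_regionBetween_eq_add (μ := volume) hf hg hs hfg hgk
          (hdcont.integrableOn_of_isBounded hbdd)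
    _ ≤ _ := by
        gcongr _ * (?_ + _)
        exact setIntegral_mono (hdcont.integrableOn_of_isBounded hupper)
          (((hu.continuous_fderiv one_ne_zero).norm.pow 2).integrableOn_of_isBounded hupper)
          (sq_fderiv_apply_snd_le u)

end Plane

/-- Poincaré-type inequality underlying the norm of the partly anisotropic space
`𝓗(Ω₁, D₀; I_l)`: functions vanishing on the bottom side `I_l` of `D₀` are controlled in
`L²(Ω₁)` by the full gradient on `Ω₀` and only the vertical derivative on `D₀`. -/
theorem signorini_anisotropic_poincare
    (a l : ℝ) (ha : 0 < a) (hl : 0 < l)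
    (γ : ℝ → ℝ) (hγ : ContDiffOn ℝ 1 γ (Set.Icc 0 a))
    (hγpos : ∀ x₁ ∈ Set.Icc (0 : ℝ) a, 0 < γ x₁)
    (Ω₀ D₀ : Set (ℝ × ℝ))
    (hΩ₀ : Ω₀ = {x : ℝ × ℝ | 0 < x.1 ∧ x.1 < a ∧ 0 < x.2 ∧ x.2 < γ x.1})
    (hD₀ : D₀ = Set.Ioo (0 : ℝ) a ×ˢ Set.Ioo (-l) 0) :
    ∃ C₀ : ℝ, 0 < C₀ ∧
      ∀ u : ℝ × ℝ → ℝ, ContDiff ℝ 1 u →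
        (∀ x₁ ∈ Set.Icc (0 : ℝ) a, u (x₁, -l) = 0) →
        (∫ x in Ω₀ ∪ D₀, (u x) ^ 2) ≤
          C₀ * ((∫ x in Ω₀, ‖fderiv ℝ u x‖ ^ 2) + ∫ x in D₀, (fderiv ℝ u x (0, 1)) ^ 2) := by
  -- The `regionBetween` lemmas need globally measurable graphs, hence this extension of `γ`.
  set γ' := IccExtend ha.le ((Icc 0 a).domRestrict γ)
  have hγ'cont : Continuous γ' := continuous_IccExtend_iff.2 hγ.continuousOn.domRestrict
  have hγ'pos : ∀ x, 0 < γ' x := fun x => hγpos _ (projIcc 0 a ha.le x).2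
  obtain ⟨M, hM⟩ := (isCompact_Icc.image_of_continuousOn hγ.continuousOn).bddAbove
  have hγ'M : ∀ x, γ' x ≤ M := fun x => hM ⟨_, (projIcc 0 a ha.le x).2, rfl⟩
  have hΩ : Ω₀ = regionBetween 0 γ' (Ioo 0 a) := by
    rw [regionBetween_congr (f' := 0) (g' := γ) (fun _ _ => rfl)
      fun x hx => IccExtend_of_mem ha.le _ (Ioo_subset_Icc_self hx)]
    ext
    simp [hΩ₀, regionBetween, and_assoc]
  have hD : D₀ = regionBetween (fun _ => -l) 0 (Ioo 0 a) := by
    ext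
    simp [hD₀, regionBetween]
  have hbdd : Bornology.IsBounded (regionBetween (fun _ => -l) γ' (Ioo 0 a)) :=
    (Metric.isBounded_Icc (0, -l) (a, M)).subset fun p ⟨hx, hy⟩ =>
      ⟨⟨hx.1.le, hy.1.le⟩, hx.2.le, hy.2.le.trans (hγ'M p.1)⟩
  refine ⟨(M + l) ^ 2, by nlinarith [hγ'pos 0, hγ'M 0], fun u hu hu0 => ?_⟩
  rw [hΩ, hD]
  exact setIntegral_regionBetween_union_sq_le hu measurable_const measurable_const
    hγ'cont.measurable measurableSet_Ioo (fun _ _ => by simp [hl.le]) (fun x _ => (hγ'pos x).le)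
    hbdd (fun x _ => by linarith [hγ'M x]) fun x hx => hu0 x (Ioo_subset_Icc_self hx)
end
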